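/- For any monic polynomial p(x) of positive degree k with integer coefficients and complex roots r_1, ..., r_k summing to ℓ, equality (1/k) ∑ |r_i - ℓ/k|² = (ℓ/k - ⌊ℓ/k⌋)(⌈ℓ/k⌉ - ℓ/k) holds if and only if every root equals ⌊ℓ/k⌋ or ⌊ℓ/k⌋ + 1. -/

import Mathlib

/-!
Write `μ = ℓ/k` and `m = ⌊μ⌋`. By the parallel-axis identity
`∑ |r i - c|² = ∑ |r i - μ|² + k |μ - c|²` with `c = m + 1/2`, the equality case is equivalent to
`∑ |r i - (m + 1/2)|² = k/4`. For a monic `q ∈ ℤ[X]` of degree `n ≥ 1` whose complex roots satisfy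
`∑ |u - (m + 1/2)|² ≤ n/4`, the integer `q(m) q(m+1) = ∏ ((u - m - 1/2)² - 1/4)` has absolute value
at most `∏ (|u - m - 1/2|² + 1/4) ≤ exp (n/2 - n) < 1`, so it vanishes. Dividing off the root `m` or
`m + 1`, which contributes exactly `1/4` to the sum, and inducting on the degree shows that every
root is `m` or `m + 1`.
-/

open Polynomial

theorem Int.fract_mul_ceil_sub_self {α : Type*} [Field α] [LinearOrder α] [IsStrictOrderedRing α]
    [FloorRing α] (a : α) : Int.fract a * (⌈a⌉ - a) = Int.fract a * (1 - Int.fract a) := by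
  by_cases h : Int.fract a = 0
  · simp [h]
  · rw [Int.ceil_sub_self_eq h]

theorem Finset.sum_norm_sub_sq_eq_add {ι E : Type*} [NormedAddCommGroup E] [InnerProductSpace ℝ E]
    (s : Finset ι) (x : ι → E) {μ : E} (hμ : ∑ i ∈ s, x i = s.card • μ) (c : E) :
    ∑ i ∈ s, ‖x i - c‖ ^ 2 = ∑ i ∈ s, ‖x i - μ‖ ^ 2 + s.card * ‖μ - c‖ ^ 2 := by
  have hcross : ∑ i ∈ s, inner ℝ (x i - μ) (μ - c) = 0 := by
    rw [← sum_inner, Finset.sum_sub_distrib, hμ, Finset.sum_const, sub_self, inner_zero_left]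
  calc ∑ i ∈ s, ‖x i - c‖ ^ 2
      = ∑ i ∈ s, (‖x i - μ‖ ^ 2 + 2 * inner ℝ (x i - μ) (μ - c) + ‖μ - c‖ ^ 2) := by
        refine Finset.sum_congr rfl fun i _ => ?_
        rw [← norm_add_sq_real, sub_add_sub_cancel]
    _ = _ := by
        rw [Finset.sum_add_distrib, Finset.sum_add_distrib, ← Finset.mul_sum, hcross,
          Finset.sum_const, nsmul_eq_mul]
        ring

theorem Complex.sum_norm_sub_sq_eq_card_mul_fract_iff {ι : Type*} (s : Finset ι) (x : ι → ℂ) {μ : ℝ}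
    (hμ : ∑ i ∈ s, x i = s.card • (μ : ℂ)) :
    ∑ i ∈ s, ‖x i - μ‖ ^ 2 = s.card * (Int.fract μ * (1 - Int.fract μ)) ↔
      ∑ i ∈ s, ‖x i - ((⌊μ⌋ : ℂ) + 1 / 2)‖ ^ 2 = s.card / 4 := by
  have hdist : ‖(μ : ℂ) - ((⌊μ⌋ : ℂ) + 1 / 2)‖ ^ 2 = (Int.fract μ - 1 / 2) ^ 2 := by
    have : (μ : ℂ) - ((⌊μ⌋ : ℂ) + 1 / 2) = ((Int.fract μ - 1 / 2 : ℝ) : ℂ) := by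
      rw [← Int.self_sub_floor]; push_cast; ring
    rw [this, Complex.norm_real, Real.norm_eq_abs, sq_abs]
  rw [s.sum_norm_sub_sq_eq_add x hμ ((⌊μ⌋ : ℂ) + 1 / 2), hdist]
  constructor <;> intro h <;> linear_combination h

theorem Complex.norm_sub_intCast_add_half_sq {m : ℤ} {u : ℂ} (hu : u = (m : ℂ) ∨ u = (m : ℂ) + 1) :
    ‖u - ((m : ℂ) + 1 / 2)‖ ^ 2 = 1 / 4 := by
  rcases hu with rfl | rfl <;> ring_nf <;> norm_num

theorem Multiset.prod_le_exp_sum_sub_card {s : Multiset ℝ} (hs : ∀ x ∈ s, 0 ≤ x) :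
    s.prod ≤ Real.exp (s.sum - Multiset.card s) := by
  have hsum : (s.map fun x => x - 1).sum = s.sum - Multiset.card s := by
    simp [Multiset.sum_map_sub]
  calc s.prod = (s.map id).prod := by rw [Multiset.map_id]
    _ ≤ (s.map fun x => Real.exp (x - 1)).prod :=
      Multiset.prod_map_le_prod_map₀ _ _ hs fun x _ => by
        linarith [Real.add_one_le_exp (x - 1), show id x = x from rfl]
    _ = Real.exp (s.sum - Multiset.card s) := by
      rw [← hsum, Real.exp_multiset_sum, Multiset.map_map]; rfl

theorem Polynomial.norm_eval_sub_mul_eval_add_le {p : ℂ[X]} (hp : p.Monic) (a : ℂ) :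
    ‖p.eval (a - 1 / 2) * p.eval (a + 1 / 2)‖ ≤
      (p.roots.map fun u => ‖u - a‖ ^ 2 + 1 / 4).prod := by
  have hsplit := IsAlgClosed.splits p
  rw [hsplit.eval_eq_prod_roots_of_monic hp, hsplit.eval_eq_prod_roots_of_monic hp,
    ← Multiset.prod_map_mul, ← normHom_apply, map_multiset_prod, Multiset.map_map]
  simp only [Function.comp_def, normHom_apply]
  refine Multiset.prod_map_le_prod_map₀ _ _ (fun _ _ => norm_nonneg _) fun u _ => ?_
  calc ‖(a - 1 / 2 - u) * (a + 1 / 2 - u)‖ = ‖(u - a) ^ 2 - 1 / 4‖ := by ring_nf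
    _ ≤ ‖u - a‖ ^ 2 + 1 / 4 :=
        (norm_sub_le _ _).trans_eq (by rw [norm_pow]; norm_num)

theorem Polynomial.eval_mul_eval_add_one_eq_zero_of_sum_norm_sq_le {q : ℤ[X]} (hq : q.Monic)
    (hdeg : 0 < q.natDegree) (m : ℤ)
    (h : ((q.aroots ℂ).map fun u => ‖u - ((m : ℂ) + 1 / 2)‖ ^ 2).sum ≤ q.natDegree / 4) :
    q.eval m * q.eval (m + 1) = 0 := by
  set p := q.map (algebraMap ℤ ℂ)
  have hcard : Multiset.card p.roots = q.natDegree := by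
    rw [IsAlgClosed.card_roots_eq_natDegree, hq.natDegree_map]
  have hev : ∀ z : ℤ, ((q.eval z : ℤ) : ℂ) = p.eval (z : ℂ) := by
    simp [p, eval_map, eval₂_at_intCast]
  have hsum : (p.roots.map fun u => ‖u - ((m : ℂ) + 1 / 2)‖ ^ 2 + 1 / 4).sum ≤
      (q.natDegree : ℝ) / 2 := by
    rw [Multiset.sum_map_add, Multiset.map_const', Multiset.sum_replicate, hcard, nsmul_eq_mul]
    linarith
  have hnorm : ‖((q.eval m * q.eval (m + 1) : ℤ) : ℂ)‖ < 1 := calc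
    _ = ‖p.eval ((m + 1 / 2 : ℂ) - 1 / 2) * p.eval ((m + 1 / 2 : ℂ) + 1 / 2)‖ := by
      rw [Int.cast_mul, hev, hev]; push_cast; ring_nf
    _ ≤ (p.roots.map fun u => ‖u - ((m : ℂ) + 1 / 2)‖ ^ 2 + 1 / 4).prod :=
      norm_eval_sub_mul_eval_add_le (hq.map _) _
    _ ≤ Real.exp (q.natDegree / 2 - q.natDegree) := by
      refine (Multiset.prod_le_exp_sum_sub_card ?_).trans ?_
      · simp only [Multiset.mem_map]
        rintro _ ⟨u, -, rfl⟩
        positivity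
      · rw [Multiset.card_map, hcard]
        gcongr
    _ < 1 := by
      rw [Real.exp_lt_one_iff]
      have : (0 : ℝ) < q.natDegree := by exact_mod_cast hdeg
      linarith
  rw [Complex.norm_intCast] at hnorm
  exact Int.abs_lt_one_iff.mp (by exact_mod_cast hnorm)

theorem Polynomial.aroots_eq_or_eq_add_one_of_sum_norm_sq_le {q : ℤ[X]} (hq : q.Monic) (m : ℤ)
    (h : ((q.aroots ℂ).map fun u => ‖u - ((m : ℂ) + 1 / 2)‖ ^ 2).sum ≤ q.natDegree / 4) :
    ∀ u ∈ q.aroots ℂ, u = m ∨ u = m + 1 := by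
  induction hn : q.natDegree generalizing q with
  | zero =>
    rw [eq_one_of_monic_natDegree_zero hq hn]
    simp
  | succ n ih =>
    obtain ⟨c, hcm, hc⟩ : ∃ c : ℤ, (c = m ∨ c = m + 1) ∧ q.IsRoot c := by
      rcases mul_eq_zero.mp (eval_mul_eval_add_one_eq_zero_of_sum_norm_sq_le hq (by omega) m h)
        with h0 | h1
      exacts [⟨m, .inl rfl, h0⟩, ⟨m + 1, .inr rfl, h1⟩]
    have hfac : (X - C c) * (q /ₘ (X - C c)) = q := mul_divByMonic_eq_iff_isRoot.mpr hc
    have hq₂ : (q /ₘ (X - C c)).Monic := (monic_X_sub_C c).of_mul_monic_left (by rwa [hfac])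
    have hdeg₂ : (q /ₘ (X - C c)).natDegree = n := by
      rw [natDegree_divByMonic _ (monic_X_sub_C c), hn, natDegree_X_sub_C, Nat.add_sub_cancel]
    have hroots : q.aroots ℂ = (c : ℂ) ::ₘ (q /ₘ (X - C c)).aroots ℂ := by
      conv_lhs => rw [← hfac]
      rw [aroots_mul (by rw [hfac]; exact hq.ne_zero), aroots_X_sub_C]
      simp
    have hcnorm := Complex.norm_sub_intCast_add_half_sq (u := c) (m := m) (by exact_mod_cast hcm)
    rw [hroots, Multiset.map_cons, Multiset.sum_cons, hcnorm, hn] at h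
    rw [hroots]
    intro u hu
    rcases Multiset.mem_cons.mp hu with rfl | hu
    · exact_mod_cast hcm
    · exact ih hq₂ (by rw [hdeg₂]; push_cast at h ⊢; linarith) hdeg₂ u hu

theorem Multiset.exists_monic_aroots_eq_of_coeff_int (s : Multiset ℂ)
    (hs : ∀ i, ∃ z : ℤ, (s.map (X - C ·)).prod.coeff i = (z : ℂ)) :
    ∃ q : ℤ[X], q.Monic ∧ q.natDegree = Multiset.card s ∧ q.aroots ℂ = s := by
  have hlifts : (s.map (X - C ·)).prod ∈ lifts (algebraMap ℤ ℂ) :=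
    lifts_iff_coeff_lifts _ |>.mpr fun i => by simpa [eq_comm] using hs i
  obtain ⟨q, hmap, hdeg, hq⟩ := lifts_and_natDegree_eq_and_monic hlifts
    (monic_multiset_prod_of_monic _ _ fun u _ => monic_X_sub_C u)
  refine ⟨q, hq, ?_, ?_⟩
  · rw [hdeg, natDegree_multiset_prod_X_sub_C_eq_card]
  · rw [aroots_def, hmap, roots_multiset_prod_X_sub_C]

/-- Equality in the root-spread bound holds iff every root equals
`⌊ℓ/k⌋` or `⌊ℓ/k⌋ + 1`. -/
theorem stmt1 (k : ℕ) (hk : 1 ≤ k) (r : Fin k → ℂ)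
    (hint : ∀ i : ℕ, ∃ z : ℤ, (∏ j, (X - C (r j))).coeff i = (z : ℂ))
    (ℓ : ℤ) (hsum : ∑ i, r i = (ℓ : ℂ)) :
    (1 / (k : ℝ)) * ∑ i, ‖r i - (((ℓ : ℝ) / k : ℝ) : ℂ)‖ ^ 2 =
      ((ℓ : ℝ) / k - ⌊(ℓ : ℝ) / k⌋) * (⌈(ℓ : ℝ) / k⌉ - (ℓ : ℝ) / k) ↔
    ∀ i, r i = ((⌊(ℓ : ℝ) / k⌋ : ℤ) : ℂ) ∨ r i = ((⌊(ℓ : ℝ) / k⌋ : ℤ) : ℂ) + 1 := by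
  set μ : ℝ := (ℓ : ℝ) / k
  have hk0 : (k : ℝ) ≠ 0 := Nat.cast_ne_zero.mpr (by omega)
  have hcard : ((Finset.univ : Finset (Fin k)).card : ℝ) = k := by simp
  have hμ : ∑ i, r i = (Finset.univ : Finset (Fin k)).card • (μ : ℂ) := by
    rw [hsum, Finset.card_univ, Fintype.card_fin, nsmul_eq_mul]
    push_cast [μ]
    exact (mul_div_cancel₀ _ (by exact_mod_cast hk0)).symm
  have hprod : ∏ j, (X - C (r j)) = ((Finset.univ.val.map r).map (X - C ·)).prod := by
    rw [Multiset.map_map]; rfl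
  obtain ⟨q, hq, hdeg, hroots⟩ :=
    (Finset.univ.val.map r).exists_monic_aroots_eq_of_coeff_int (hprod ▸ hint)
  have hvar := Complex.sum_norm_sub_sq_eq_card_mul_fract_iff _ r hμ
  rw [hcard] at hvar
  rw [Int.self_sub_floor, Int.fract_mul_ceil_sub_self, one_div, inv_mul_eq_iff_eq_mul₀ hk0, hvar]
  constructor
  · intro h i
    refine q.aroots_eq_or_eq_add_one_of_sum_norm_sq_le hq _ ?_ (r i) ?_
    · rw [hroots, hdeg, Multiset.map_map, Multiset.card_map, Finset.card_val, Finset.card_univ,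
        Fintype.card_fin]
      exact h.le
    · rw [hroots]; exact Multiset.mem_map_of_mem r (Finset.mem_univ i)
  · intro h
    rw [Finset.sum_congr rfl fun i _ => Complex.norm_sub_intCast_add_half_sq (h i)]
    rw [Finset.sum_const, Finset.card_univ, Fintype.card_fin, nsmul_eq_mul]
    ring
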